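/- Let U be an open subset of ℂⁿ, let h : U → ℂ be holomorphic, and let x ∈ U satisfy h(x) ≠ 0 and fderiv ℂ h x = 0. Suppose the complex Hessian of h at x, i.e. the continuous ℂ-linear map H : ℂⁿ → (ℂⁿ →L[ℂ] ℂ) obtained as the complex Fréchet derivative at x of the map z ↦ fderiv ℂ h z, is bijective. Then, regarding |h| as a real-valued function on U ⊆ ℝ^{2n}: x is a critical point of |h|; the real Hessian bilinear form B of |h| at x (the second real Fréchet derivative at x) is nondegenerate; and there exist real subspaces P and N of ℝ^{2n} with dim P = dim N = n, ℝ^{2n} = P ⊕ N, such that B is positive definite on P and negative definite on N. In other words, x is a nondegenerate real critical point of |h| of Morse index n. -/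

import Mathlib

/-!
Where `h ≠ 0`, `d|h| = |h|⁻¹ ⟪h, dh⟫`; since `dh` vanishes at `x`, the product rule gives the real
Hessian of `|h|` at `x` as `B(v, w) = |h x|⁻¹ Re (conj (h x) · H(v, w))`, with `H` the complex
Hessian. The complex bilinear form `β = conj (h x) · H` is symmetric and nondegenerate, so in
suitable complex coordinates `β(z, z) = ∑ zᵢ²`. Its real part is then positive definite on the real
vectors `ℝⁿ` and negative definite on `i ℝⁿ`, and these have complementary dimensions.
-/

open Filter Topology ContinuousLinearMap Module
open scoped InnerProductSpace ComplexConjugate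

theorem differentiableAt_of_injective_fderiv {𝕜 E F : Type*} [NontriviallyNormedField 𝕜]
    [NormedAddCommGroup E] [NormedSpace 𝕜 E] [NormedAddCommGroup F] [NormedSpace 𝕜 F]
    {f : E → F} {x : E} (hf : Function.Injective (fderiv 𝕜 f x)) : DifferentiableAt 𝕜 f x := by
  by_contra hnd
  rw [fderiv_zero_of_not_differentiableAt hnd] at hf
  have : Subsingleton E := ⟨fun a b => hf rfl⟩
  exact hnd (hasFDerivAt_of_subsingleton f x).differentiableAt

section Real

variable {E F : Type*} [NormedAddCommGroup E] [NormedSpace ℝ E]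
  [NormedAddCommGroup F] [InnerProductSpace ℝ F] {f : E → F} {x : E}

theorem hasStrictFDerivAt_norm {y : F} (hy : y ≠ 0) :
    HasStrictFDerivAt (‖·‖) (‖y‖⁻¹ • innerSL ℝ y) y := by
  have hy' : ‖y‖ ≠ 0 := norm_ne_zero_iff.mpr hy
  have h := (Real.hasStrictDerivAt_sqrt (pow_ne_zero 2 hy')).comp_hasStrictFDerivAt y
    (hasStrictFDerivAt_norm_sq y)
  simp only [Function.comp_def, Real.sqrt_sq (norm_nonneg _)] at h
  refine h.congr_fderiv ?_
  rw [← Nat.cast_smul_eq_nsmul ℝ, smul_smul]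
  congr 1
  push_cast
  field_simp

theorem HasFDerivAt.norm {f' : E →L[ℝ] F} (hf : HasFDerivAt f f' x) (h0 : f x ≠ 0) :
    HasFDerivAt (‖f ·‖) ((‖f x‖⁻¹ • innerSL ℝ (f x)).comp f') x :=
  (hasStrictFDerivAt_norm h0).hasFDerivAt.comp x hf

theorem hasFDerivAt_fderiv_norm_of_fderiv_eq_zero
    (hf : ∀ᶠ z in 𝓝 x, DifferentiableAt ℝ f z) (h0 : f x ≠ 0) (hcrit : fderiv ℝ f x = 0)
    {D : E →L[ℝ] E →L[ℝ] F} (hD : HasFDerivAt (fderiv ℝ f) D x) :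
    HasFDerivAt (fderiv ℝ (‖f ·‖)) ((compL ℝ E F ℝ (‖f x‖⁻¹ • innerSL ℝ (f x))).comp D) x := by
  have hnorm : fderiv ℝ (‖f ·‖) =ᶠ[𝓝 x]
      fun z => (‖f z‖⁻¹ • innerSL ℝ (f z)).comp (fderiv ℝ f z) := by
    filter_upwards [hf, hf.self_of_nhds.continuousAt.eventually_ne h0] with z hz hz0
    exact (hz.hasFDerivAt.norm hz0).fderiv
  have hcoef : DifferentiableAt ℝ (fun z => ‖f z‖⁻¹ • innerSL ℝ (f z)) x :=
    ((hf.self_of_nhds.norm ℝ h0).inv (norm_ne_zero_iff.mpr h0)).smul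
      ((innerSL ℝ).differentiableAt.comp x hf.self_of_nhds)
  have := hcoef.hasFDerivAt.clm_comp hD
  rw [hcrit] at this
  simpa using this.congr_of_eventuallyEq hnorm

end Real

theorem hasFDerivAt_fderiv_restrictScalars (𝕜 : Type*) {𝕜' E F : Type*}
    [NontriviallyNormedField 𝕜] [NontriviallyNormedField 𝕜'] [NormedAlgebra 𝕜 𝕜']
    [NormedAddCommGroup E] [NormedSpace 𝕜 E] [NormedSpace 𝕜' E] [IsScalarTower 𝕜 𝕜' E]
    [NormedAddCommGroup F] [NormedSpace 𝕜 F] [NormedSpace 𝕜' F] [IsScalarTower 𝕜 𝕜' F]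
    {f : E → F} {x : E}
    {H : E →L[𝕜'] E →L[𝕜'] F} (hf : ∀ᶠ z in 𝓝 x, DifferentiableAt 𝕜' f z)
    (hH : HasFDerivAt (fderiv 𝕜' f) H x) :
    HasFDerivAt (fderiv 𝕜 f) (H.bilinearRestrictScalars 𝕜) x :=
  ((restrictScalarsL 𝕜' E F 𝕜 𝕜).hasFDerivAt.comp x (hH.restrictScalars 𝕜)).congr_of_eventuallyEq
    (hf.mono fun _ hz => hz.fderiv_restrictScalars 𝕜)

theorem LinearMap.eq_zero_of_forall_re_apply_eq_zero {E : Type*} [AddCommGroup E] [Module ℂ E]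
    (ℓ : E →ₗ[ℂ] ℂ) (h : ∀ w, (ℓ w).re = 0) : ℓ = 0 := by
  ext w
  by_contra hw
  simpa [inv_mul_cancel₀ hw] using h ((ℓ w)⁻¹ • w)

theorem Submodule.isCompl_of_pos_of_neg {V : Type*} [AddCommGroup V] [Module ℝ V]
    [FiniteDimensional ℝ V] (q : V → ℝ) {P N : Submodule ℝ V}
    (hdim : finrank ℝ V ≤ finrank ℝ P + finrank ℝ N)
    (hP : ∀ v ∈ P, v ≠ 0 → 0 < q v) (hN : ∀ v ∈ N, v ≠ 0 → q v < 0) : IsCompl P N := by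
  refine (Submodule.isCompl_iff_disjoint P N hdim).mpr (Submodule.disjoint_def.mpr ?_)
  intro v hvP hvN
  by_contra hv
  exact (hP v hvP hv).not_gt (hN v hvN hv)

section RealSmul

variable (ι : Type*)

noncomputable def realSmul (t : ℂ) : (ι → ℝ) →ₗ[ℝ] (ι → ℂ) :=
  LinearMap.pi fun i => (LinearMap.proj i).smulRight t

variable {ι}

@[simp]
theorem realSmul_apply (t : ℂ) (a : ι → ℝ) (i : ι) : realSmul ι t a i = a i * t :=
  Complex.real_smul

theorem realSmul_injective {t : ℂ} (ht : t ≠ 0) : Function.Injective (realSmul ι t) := by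
  intro a b hab
  funext i
  simpa [ht] using congr_fun hab i

theorem weightedSumSquares_realSmul [Fintype ι] (t : ℂ) (a : ι → ℝ) :
    QuadraticMap.weightedSumSquares ℂ (1 : ι → ℂ) (realSmul ι t a) = t ^ 2 * ↑(∑ i, a i ^ 2) := by
  simp only [QuadraticMap.weightedSumSquares_apply, realSmul_apply, Pi.one_apply, one_smul,
    Complex.ofReal_sum, Complex.ofReal_pow, Finset.mul_sum]
  exact Finset.sum_congr rfl fun i _ => by ring

end RealSmul

theorem LinearMap.BilinForm.exists_isCompl_re_pos_neg {V : Type*} [AddCommGroup V] [Module ℝ V]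
    [Module ℂ V] [IsScalarTower ℝ ℂ V] [FiniteDimensional ℂ V] (β : LinearMap.BilinForm ℂ V)
    (hsymm : β.IsSymm) (hβ : β.SeparatingLeft) :
    ∃ P N : Submodule ℝ V, finrank ℝ P = finrank ℂ V ∧ finrank ℝ N = finrank ℂ V ∧
      IsCompl P N ∧ (∀ v ∈ P, v ≠ 0 → 0 < (β v v).re) ∧ (∀ v ∈ N, v ≠ 0 → (β v v).re < 0) := by
  have : Invertible (2 : ℂ) := invertibleOfNonzero two_ne_zero
  obtain ⟨φ⟩ := QuadraticForm.equivalent_weightedSumSquares_of_isAlgClosed β.toQuadraticMap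
    (by rwa [QuadraticMap.associated_left_inverse _ hsymm.eq])
  set m := finrank ℂ V
  let j (t : ℂ) : (Fin m → ℝ) →ₗ[ℝ] V :=
    (φ.symm.toLinearEquiv.restrictScalars ℝ).toLinearMap ∘ₗ realSmul (Fin m) t
  have hj_inj {t : ℂ} (ht : t ≠ 0) : Function.Injective (j t) :=
    (φ.symm.toLinearEquiv.restrictScalars ℝ).injective.comp (realSmul_injective ht)
  have hj (t : ℂ) (a : Fin m → ℝ) : (β (j t a) (j t a)).re = (t ^ 2).re * ∑ i, a i ^ 2 := by
    have := φ.symm.map_app (realSmul (Fin m) t a)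
    rw [weightedSumSquares_realSmul, LinearMap.BilinMap.toQuadraticMap_apply] at this
    simp only [j, LinearMap.coe_comp, Function.comp_apply, LinearEquiv.coe_coe,
      LinearEquiv.restrictScalars_apply, QuadraticMap.IsometryEquiv.coe_toLinearEquiv, this]
    exact Complex.re_mul_ofReal _ _
  have hsum {t : ℂ} {a : Fin m → ℝ} (ha : j t a ≠ 0) : 0 < ∑ i, a i ^ 2 := by
    obtain ⟨i, hi⟩ := Function.ne_iff.mp (show a ≠ 0 by rintro rfl; exact ha (map_zero _))
    exact Finset.sum_pos' (fun i _ => sq_nonneg (a i)) ⟨i, Finset.mem_univ i, sq_pos_of_ne_zero hi⟩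
  have hP : ∀ v ∈ LinearMap.range (j 1), v ≠ 0 → 0 < (β v v).re := by
    rintro _ ⟨a, rfl⟩ ha
    simpa [hj] using hsum ha
  have hN : ∀ v ∈ LinearMap.range (j Complex.I), v ≠ 0 → (β v v).re < 0 := by
    rintro _ ⟨a, rfl⟩ ha
    simpa [hj] using hsum ha
  have : FiniteDimensional ℝ V := .trans ℝ ℂ V
  have hrank {t : ℂ} (ht : t ≠ 0) : finrank ℝ (LinearMap.range (j t)) = m := by
    simp [LinearMap.finrank_range_of_inj (hj_inj ht)]
  refine ⟨_, _, hrank one_ne_zero, hrank Complex.I_ne_zero,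
    Submodule.isCompl_of_pos_of_neg (fun v => (β v v).re) ?_ hP hN, hP, hN⟩
  rw [hrank one_ne_zero, hrank Complex.I_ne_zero, ← Module.finrank_mul_finrank ℝ ℂ V,
    Complex.finrank_real_complex]
  omega

/-- If `h` is holomorphic on an open `U ⊆ ℂⁿ`, `x ∈ U`, `h x ≠ 0`,
`x` is a critical point of `h`, and the complex Hessian of `h` at `x` is bijective,
then `x` is a critical point of `|h|` (as a real function), the real Hessian
bilinear form of `|h|` at `x` is nondegenerate, and it splits into an
`n`-dimensional positive definite subspace and an `n`-dimensional negative
definite subspace: `x` is a nondegenerate critical point of `|h|` of Morse index `n`. -/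
theorem stmt_1 {n : ℕ} {U : Set (Fin n → ℂ)} (hU : IsOpen U)
    {h : (Fin n → ℂ) → ℂ} (hh : DifferentiableOn ℂ h U)
    {x : Fin n → ℂ} (hx : x ∈ U) (hne : h x ≠ 0)
    (hcrit : fderiv ℂ h x = 0)
    (hHess : Function.Bijective (fderiv ℂ (fun z => fderiv ℂ h z) x)) :
    fderiv ℝ (fun z => ‖h z‖) x = 0 ∧
    (∀ v : Fin n → ℂ,
        (∀ w : Fin n → ℂ,
          fderiv ℝ (fun z => fderiv ℝ (fun y => ‖h y‖) z) x v w = 0) → v = 0) ∧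
    ∃ P N : Submodule ℝ (Fin n → ℂ),
      Module.finrank ℝ P = n ∧ Module.finrank ℝ N = n ∧ IsCompl P N ∧
      (∀ v ∈ P, v ≠ 0 →
        0 < fderiv ℝ (fun z => fderiv ℝ (fun y => ‖h y‖) z) x v v) ∧
      (∀ v ∈ N, v ≠ 0 →
        fderiv ℝ (fun z => fderiv ℝ (fun y => ‖h y‖) z) x v v < 0) := by
  set H := fderiv ℂ (fun z => fderiv ℂ h z) x
  have hdiff : ∀ᶠ z in 𝓝 x, DifferentiableAt ℂ h z :=
    eventually_of_mem (hU.mem_nhds hx) fun z hz => hh.differentiableAt (hU.mem_nhds hz)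
  -- `fderiv` is `0` where it does not exist, so a bijective Hessian is a genuine derivative
  -- (or the space is trivial).
  have hH : HasFDerivAt (fderiv ℂ h) H x :=
    (differentiableAt_of_injective_fderiv hHess.injective).hasFDerivAt
  have hdiffR : ∀ᶠ z in 𝓝 x, DifferentiableAt ℝ h z := hdiff.mono fun _ hz => hz.restrictScalars ℝ
  have hcritR : fderiv ℝ h x = 0 := by
    rw [hdiff.self_of_nhds.fderiv_restrictScalars ℝ, hcrit, restrictScalars_zero]
  have hB := hasFDerivAt_fderiv_norm_of_fderiv_eq_zero hdiffR hne hcritR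
    (hasFDerivAt_fderiv_restrictScalars ℝ hdiff hH)
  let β : LinearMap.BilinForm ℂ (Fin n → ℂ) := conj (h x) • H.toLinearMap₁₂
  have hB_apply (v w : Fin n → ℂ) : fderiv ℝ (fun z => fderiv ℝ (fun y => ‖h y‖) z) x v w =
      ‖h x‖⁻¹ * (β v w).re := by
    simp [hB.fderiv, β, Complex.inner, mul_comm]
  have hβ_symm : β.IsSymm := ⟨fun v w => by
    simp [β, second_derivative_symmetric_of_eventually
      (hdiff.mono fun _ hz => hz.hasFDerivAt) hH v w]⟩
  have hβ_sep : β.SeparatingLeft := fun v hv => hHess.injective <| by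
    ext w
    simpa [β, hne] using hv w
  obtain ⟨P, N, hP_dim, hN_dim, hPN, hP, hN⟩ := β.exists_isCompl_re_pos_neg hβ_symm hβ_sep
  have hnorm_inv : 0 < ‖h x‖⁻¹ := inv_pos.mpr (norm_pos_iff.mpr hne)
  refine ⟨by simpa [hcritR] using (hdiffR.self_of_nhds.hasFDerivAt.norm hne).fderiv,
    fun v hv => hβ_sep v fun w => ?_, P, N, by simpa using hP_dim, by simpa using hN_dim, hPN,
    fun v hv hv0 => by simpa [hB_apply] using mul_pos hnorm_inv (hP v hv hv0),
    fun v hv hv0 => by simpa [hB_apply] using mul_neg_of_pos_of_neg hnorm_inv (hN v hv hv0)⟩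
  refine LinearMap.congr_fun ((β v).eq_zero_of_forall_re_apply_eq_zero fun w => ?_) w
  simpa [hB_apply, hnorm_inv.ne'] using hv w
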